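/- Let G be a cyclically 5-connected cubic graph, let e and f be distinct edges of G with no common end and such that no edge of G is adjacent to both e and f, and let G' be obtained from G by subdividing e and f and joining the two new vertices by an edge (a handle expansion). Then G' is cyclically 5-connected. -/

import Mathlib

open SimpleGraph

/-- A graph has a circuit if it contains a cycle. -/
def HasCircuit {V : Type} (G : SimpleGraph V) : Prop :=
  ∃ (v : V) (w : G.Walk v v), w.IsCycle

/-- `s` is the vertex set of a quadrangle (circuit of length four) of `G`. -/
def IsQuadSet {V : Type} (G : SimpleGraph V) (s : Set V) : Prop :=
  ∃ a b c d : V, s = {a, b, c, d} ∧ a ≠ b ∧ a ≠ c ∧ a ≠ d ∧ b ≠ c ∧ b ≠ d ∧ c ≠ d ∧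
    G.Adj a b ∧ G.Adj b c ∧ G.Adj c d ∧ G.Adj d a

def HasQuadrangle {V : Type} (G : SimpleGraph V) : Prop := ∃ s, IsQuadSet G s

def AtMostOneQuadrangle {V : Type} (G : SimpleGraph V) : Prop :=
  ∀ s t, IsQuadSet G s → IsQuadSet G t → s = t

/-- The edge cut `δA`: edges with one end in `A` and the other outside. -/
def cutEdges {V : Type} (G : SimpleGraph V) (A : Set V) : Set (Sym2 V) :=
  {e | ∃ a b, a ∈ A ∧ b ∉ A ∧ G.Adj a b ∧ e = s(a, b)}

/-- `G` is `k`-connected: more than `k` vertices and removing fewer than `k`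
vertices leaves a connected graph. -/
def IsKConnected {V : Type} [Fintype V] (G : SimpleGraph V) (k : ℕ) : Prop :=
  k < Fintype.card V ∧ ∀ S : Set V, S.ncard < k → (G.induce Sᶜ).Connected

/-- Every vertex has degree three. -/
def IsCubic {V : Type} (G : SimpleGraph V) : Prop :=
  ∀ v : V, (G.neighborSet v).ncard = 3

/-- Cyclically `k`-connected cubic graph: 3-connected, at least `2k` vertices, and
every edge-cut of cardinality less than `k` has a circuit-free side. -/
def CyclicallyKConnected {V : Type} [Fintype V] (G : SimpleGraph V) (k : ℕ) : Prop :=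
  IsKConnected G 3 ∧ 2 * k ≤ Fintype.card V ∧
    ∀ A : Set V, A.Nonempty → Aᶜ.Nonempty → (cutEdges G A).ncard < k →
      ¬ HasCircuit (G.induce A) ∨ ¬ HasCircuit (G.induce Aᶜ)

/-- The induced subgraph on `A` is (exactly) a quadrangle. -/
def IsQuadrangleGraphOn {V : Type} (G : SimpleGraph V) (A : Set V) : Prop :=
  ∃ a b c d : V, A = {a, b, c, d} ∧ a ≠ b ∧ a ≠ c ∧ a ≠ d ∧ b ≠ c ∧ b ≠ d ∧ c ≠ d ∧
    G.Adj a b ∧ G.Adj b c ∧ G.Adj c d ∧ G.Adj d a ∧ ¬ G.Adj a c ∧ ¬ G.Adj b d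

/-- Quad-connected cubic graph. -/
def QuadConnected {V : Type} [Fintype V] (G : SimpleGraph V) : Prop :=
  CyclicallyKConnected G 4 ∧ 10 ≤ Fintype.card V ∧
    ((∃ s t, IsQuadSet G s ∧ IsQuadSet G t ∧ s ≠ t) → 12 ≤ Fintype.card V) ∧
    ∀ A : Set V, A.Nonempty → Aᶜ.Nonempty → (cutEdges G A).ncard ≤ 4 →
      (¬ HasCircuit (G.induce A) ∨ IsQuadrangleGraphOn G A) ∨
      (¬ HasCircuit (G.induce Aᶜ) ∨ IsQuadrangleGraphOn G Aᶜ)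

/-- `G+(u,v,x,y)`: subdivide the edges `uv` and `xy` (new vertices `Sum.inr 0`
resp. `Sum.inr 1`) and join the two new vertices by an edge. -/
def onePlus {V : Type} (G : SimpleGraph V) (u v x y : V) : SimpleGraph (V ⊕ Fin 2) :=
  SimpleGraph.fromRel (fun a b =>
    match a, b with
    | Sum.inl a, Sum.inl b => G.Adj a b ∧ s(a, b) ≠ s(u, v) ∧ s(a, b) ≠ s(x, y)
    | Sum.inl a, Sum.inr i => (i = 0 ∧ (a = u ∨ a = v)) ∨ (i = 1 ∧ (a = x ∨ a = y))
    | Sum.inr _, Sum.inl _ => False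
    | Sum.inr i, Sum.inr j => i ≠ j)

/-- The data of a 1-extension `G+(u,v,x,y)`: `uv`, `xy` are edges and
`u,v,x,y` are pairwise distinct. -/
def OneExtData {V : Type} (G : SimpleGraph V) (u v x y : V) : Prop :=
  G.Adj u v ∧ G.Adj x y ∧ u ≠ x ∧ u ≠ y ∧ v ≠ x ∧ v ≠ y

/-- A long 1-extension: moreover neither `u` nor `v` is adjacent to `x` or `y`. -/
def LongOneExtData {V : Type} (G : SimpleGraph V) (u v x y : V) : Prop :=
  OneExtData G u v x y ∧ ¬ G.Adj u x ∧ ¬ G.Adj u y ∧ ¬ G.Adj v x ∧ ¬ G.Adj v y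

/-- A short 1-extension: a 1-extension that is not long. -/
def ShortOneExtData {V : Type} (G : SimpleGraph V) (u v x y : V) : Prop :=
  OneExtData G u v x y ∧ (G.Adj u x ∨ G.Adj u y ∨ G.Adj v x ∨ G.Adj v y)

/-- A homeomorphic embedding of `G` into `H`. -/
structure HomeoEmb {V W : Type} (G : SimpleGraph V) (H : SimpleGraph W) where
  vmap : V → W
  vinj : Function.Injective vmap
  emap : ∀ ⦃a b : V⦄, G.Adj a b → H.Walk (vmap a) (vmap b)
  emap_path : ∀ ⦃a b : V⦄ (h : G.Adj a b), (emap h).IsPath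
  emap_symm : ∀ ⦃a b : V⦄ (h : G.Adj a b), (emap h.symm).reverse = emap h
  internal : ∀ ⦃a b : V⦄ (h : G.Adj a b) (w : W), w ∈ (emap h).support →
      w ∈ Set.range vmap → w = vmap a ∨ w = vmap b
  edge_disjoint : ∀ ⦃a b c d : V⦄ (h₁ : G.Adj a b) (h₂ : G.Adj c d),
      s(a, b) ≠ s(c, d) → ∀ e, e ∈ (emap h₁).edges → e ∉ (emap h₂).edges
  meet_ends : ∀ ⦃a b c d : V⦄ (h₁ : G.Adj a b) (h₂ : G.Adj c d),
      s(a, b) ≠ s(c, d) → ∀ w, w ∈ (emap h₁).support → w ∈ (emap h₂).support →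
      (w = vmap a ∨ w = vmap b) ∧ (w = vmap c ∨ w = vmap d)

/-- Subdividing the edge `uv` of `G`: the new vertex is `Sum.inr ()`. -/
def subdivideEdge {V : Type} (G : SimpleGraph V) (u v : V) : SimpleGraph (V ⊕ Unit) :=
  SimpleGraph.fromRel (fun a b =>
    match a, b with
    | Sum.inl a, Sum.inl b => G.Adj a b ∧ s(a, b) ≠ s(u, v)
    | Sum.inl a, Sum.inr _ => a = u ∨ a = v
    | _, _ => False)

/-- `S` is obtained from `G` by repeatedly subdividing edges. -/
inductive IsSubdivision {V : Type} (G : SimpleGraph V) : {W : Type} → SimpleGraph W → Prop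
  | refl : IsSubdivision G G
  | step {W : Type} {S : SimpleGraph W} {u v : W} (h : S.Adj u v)
      (hS : IsSubdivision G S) : IsSubdivision G (subdivideEdge S u v)

/-- `H` topologically contains `G`: some graph obtained from `G` by repeatedly
subdividing edges is isomorphic to a subgraph of `H`. -/
def TopContains {W V : Type} (H : SimpleGraph W) (G : SimpleGraph V) : Prop :=
  ∃ (U : Type) (S : SimpleGraph U), IsSubdivision G S ∧
    ∃ f : U → W, Function.Injective f ∧ ∀ a b : U, S.Adj a b → H.Adj (f a) (f b)

/-- The biladder on `2p` vertices; `(false, i)` is `uᵢ` and `(true, i)` is `vᵢ`. -/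
def biladder (p : ℕ) : SimpleGraph (Bool × ZMod p) :=
  SimpleGraph.fromRel (fun a b =>
    (a.1 = false ∧ b.1 = false ∧ b.2 = a.2 + 1) ∨
    (a.1 = true ∧ b.1 = true ∧ b.2 = a.2 + 2) ∨
    (a.1 = false ∧ b.1 = true ∧ a.2 = b.2))


/-!
Write `G'` for the handle expansion, `z₀, z₁` for the new vertices and `B = A ∩ V` for a vertex
set `A` of `G'`. Every circuit of `G'` passes through at least three old vertices: a shorter one
would use an edge between the ends of `e` and those of `f`. Mapping each edge of `G'` to the edge
of `G` it comes from shows `|δ_G B| ≤ |δ_{G'} A|`. Hence a cut of `G'` with fewer than five edges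
and circuits on both sides gives a cut of `G` with at most four edges and at least three vertices
on each side; one side is a forest, and in a cubic graph a forest side `F` has `|F| + 2 ≤ |δF|`.

For 3-connectivity, contract `z₀` onto `u` and `z₁` onto `x`: a set `S` of at most two vertices
of `G'` becomes such a set of `G`, so paths of `G - S` lift to `G' - S`, and every surviving
vertex of `G'` is adjacent, or joined through `z₀` or `z₁`, to a lifted one.
-/

namespace SimpleGraph

/-- Every vertex of `C` has a neighbour in `C` other than any given vertex, i.e. at least two
neighbours in `C`. -/
def TwoNeighborsIn {W : Type*} (H : SimpleGraph W) (C : Set W) : Prop :=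
  ∀ c ∈ C, ∀ p, ∃ q ∈ C, H.Adj c q ∧ q ≠ p

lemma Walk.IsCycle.twoNeighborsIn_support {W : Type*} {H : SimpleGraph W} {a : W}
    {w : H.Walk a a} (hw : w.IsCycle) : H.TwoNeighborsIn {c | c ∈ w.support} := by
  intro c hc p
  obtain ⟨q₁, q₂, hq, hN⟩ := Set.ncard_eq_two.mp (hw.ncard_neighborSet_toSubgraph_eq_two hc)
  obtain ⟨q, hqN, hqp⟩ : ∃ q ∈ w.toSubgraph.neighborSet c, q ≠ p := by
    by_cases h : q₁ = p
    · exact ⟨q₂, by simp [hN], by rintro rfl; exact hq h⟩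
    · exact ⟨q₁, by simp [hN], h⟩
  exact ⟨q, w.mem_support_of_adj_toSubgraph (Subgraph.adj_symm _ hqN), hqN.adj_sub, hqp⟩

lemma TwoNeighborsIn.image_val {W : Type*} {H : SimpleGraph W} {A : Set W} {C : Set A}
    (hC : (H.induce A).TwoNeighborsIn C) : H.TwoNeighborsIn (Subtype.val '' C) := by
  rintro _ ⟨c, hc, rfl⟩ p
  by_cases hp : p ∈ A
  · obtain ⟨q, hq, hadj, hqp⟩ := hC c hc ⟨p, hp⟩
    exact ⟨q, ⟨q, hq, rfl⟩, hadj, fun h => hqp (Subtype.ext h)⟩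
  · obtain ⟨q, hq, hadj, -⟩ := hC c hc c
    exact ⟨q, ⟨q, hq, rfl⟩, hadj, fun h => hp (h ▸ q.2)⟩

lemma exists_twoNeighborsIn_of_hasCircuit {W : Type} {H : SimpleGraph W} {A : Set W}
    (h : HasCircuit (H.induce A)) : ∃ C ⊆ A, C.Nonempty ∧ H.TwoNeighborsIn C := by
  obtain ⟨a, w, hw⟩ := h
  exact ⟨Subtype.val '' {c | c ∈ w.support}, by simp, ⟨a, a, w.start_mem_support, rfl⟩,
    hw.twoNeighborsIn_support.image_val⟩

lemma IsAcyclic.card_edgeFinset_add_one_le {W : Type*} [Fintype W] [Nonempty W]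
    {H : SimpleGraph W} [Fintype H.edgeSet] (hH : H.IsAcyclic) :
    H.edgeFinset.card + 1 ≤ Fintype.card W := by
  obtain ⟨F, hHF, -, hF, hreach⟩ :=
    exists_isAcyclic_reachable_eq_le_of_le_of_isAcyclic (le_top : H ≤ ⊤) hH
  have hconn : F.Connected :=
    ⟨(preconnected_iff_reachable_eq_top F).mpr (hreach.trans
      ((preconnected_iff_reachable_eq_top ⊤).mp connected_top.preconnected))⟩
  classical
  rw [← (IsTree.mk hconn hF).card_edgeFinset]
  gcongr

lemma Adj.reachable_induce {W : Type*} {K : SimpleGraph W} {T : Set W} {a b : W}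
    (h : K.Adj a b) (ha : a ∈ T) (hb : b ∈ T) : (K.induce T).Reachable ⟨a, ha⟩ ⟨b, hb⟩ :=
  Adj.reachable h

lemma Connected.of_reachable_map {α β : Type*} {H : SimpleGraph α} {K : SimpleGraph β}
    (hH : H.Connected) (f : α → β) (hf : ∀ a b, H.Adj a b → K.Reachable (f a) (f b))
    (hK : ∀ r, ∃ a, K.Reachable (f a) r) : K.Connected := by
  have : Nonempty β := ⟨f hH.nonempty.some⟩
  have hreach : ∀ a b, K.Reachable (f a) (f b) := fun a b =>
    (reachable_iff_reflTransGen _ _).mpr <| Relation.ReflTransGen.lift' f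
      (fun a b h => (reachable_iff_reflTransGen _ _).mp (hf a b h)) _ _
      ((reachable_iff_reflTransGen a b).mp (hH.preconnected a b))
  refine Connected.mk fun r s => ?_
  obtain ⟨a, ha⟩ := hK r
  obtain ⟨b, hb⟩ := hK s
  exact ha.symm.trans ((hreach a b).trans hb)

end SimpleGraph

lemma cutEdges_compl {V : Type} (G : SimpleGraph V) (B : Set V) :
    cutEdges G Bᶜ = cutEdges G B := by
  ext e
  constructor <;>
  · rintro ⟨a, b, ha, hb, hadj, rfl⟩
    exact ⟨b, a, by simpa using hb, by simpa using ha, hadj.symm, Sym2.eq_swap⟩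

lemma mem_cutEdges_or_mem_cutEdges_of_adj_adj {V : Type} {G : SimpleGraph V} {A : Set V}
    {a z b : V} (ha : a ∈ A) (hb : b ∉ A) (haz : G.Adj a z) (hzb : G.Adj z b) :
    s(a, z) ∈ cutEdges G A ∨ s(z, b) ∈ cutEdges G A := by
  by_cases hz : z ∈ A
  · exact Or.inr ⟨z, b, hz, hb, hzb, rfl⟩
  · exact Or.inl ⟨a, z, ha, hz, haz, rfl⟩

lemma sum_ncard_neighborSet_diff_le_ncard_cutEdges {V : Type} [Fintype V] (G : SimpleGraph V)
    (B : Set V) [DecidablePred (· ∈ B)] :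
    ∑ b : B, (G.neighborSet b \ B).ncard ≤ (cutEdges G B).ncard := by
  classical
  let P := (Finset.univ : Finset B).sigma fun b => (G.neighborSet b \ B).toFinset
  have memP : ∀ p, p ∈ (P : Set (Σ _ : B, V)) ↔ G.Adj p.1 p.2 ∧ p.2 ∉ B := by simp [P]
  have hP : P.card = ∑ b : B, (G.neighborSet b \ B).ncard := by
    simp [P, Finset.card_sigma, Set.ncard_eq_toFinset_card']
  rw [← hP, ← Set.ncard_coe_finset]
  refine Set.ncard_le_ncard_of_injOn (fun p => s(p.1.1, p.2)) ?_ ?_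
  · rintro ⟨b, c⟩ hp
    rw [memP] at hp
    exact ⟨b, c, b.2, hp.2, hp.1, rfl⟩
  · rintro ⟨b, c⟩ hp ⟨b', c'⟩ hp' h
    rw [memP] at hp hp'
    rcases Sym2.eq_iff.mp h with ⟨h₁, rfl⟩ | ⟨h₁, -⟩
    · obtain rfl : b = b' := Subtype.ext h₁
      rfl
    · exact (hp'.2 (h₁ ▸ b.2 :)).elim

lemma IsCubic.exists_two_neighbors_ne {V : Type} {G : SimpleGraph V} (hG : IsCubic G)
    {u v : V} (huv : G.Adj u v) :
    ∃ w₁ w₂, w₁ ≠ w₂ ∧ G.Adj u w₁ ∧ G.Adj u w₂ ∧ w₁ ≠ v ∧ w₂ ≠ v := by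
  have h2 : (G.neighborSet u \ {v}).ncard = 2 := by
    rw [Set.ncard_sdiff_singleton_of_mem (show v ∈ G.neighborSet u from huv), hG u]
  obtain ⟨w₁, w₂, hne, hN⟩ := Set.ncard_eq_two.mp h2
  have h₁ : w₁ ∈ G.neighborSet u \ {v} := hN ▸ Or.inl rfl
  have h₂ : w₂ ∈ G.neighborSet u \ {v} := hN ▸ Or.inr rfl
  exact ⟨w₁, w₂, hne, h₁.1, h₂.1, h₁.2, h₂.2⟩

lemma IsCubic.ncard_add_two_le_ncard_cutEdges {V : Type} [Fintype V] {G : SimpleGraph V}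
    (hG : IsCubic G) {B : Set V} (hB : B.Nonempty) (hacyc : ¬ HasCircuit (G.induce B)) :
    B.ncard + 2 ≤ (cutEdges G B).ncard := by
  classical
  have : Nonempty B := hB.to_subtype
  have hforest : (G.induce B).edgeFinset.card + 1 ≤ Fintype.card B :=
    IsAcyclic.card_edgeFinset_add_one_le fun a w hw => hacyc ⟨a, w, hw⟩
  have hdeg : ∀ b : B, (G.induce B).degree b + (G.neighborSet b \ B).ncard = 3 := by
    intro b
    rw [← hG b, ← Set.ncard_inter_add_ncard_sdiff_eq_ncard (G.neighborSet b) B,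
      ← card_neighborSet_eq_degree, ← Nat.card_eq_fintype_card, Nat.card_coe_set_eq,
      neighborSet_induce, ← Set.ncard_image_of_injective _ Subtype.val_injective,
      Subtype.image_preimage_coe, Set.inter_comm]
  have hsum : ∑ b : B, ((G.induce B).degree b + (G.neighborSet b \ B).ncard) =
      3 * Fintype.card B := by
    simp [hdeg, mul_comm]
  rw [Finset.sum_add_distrib, sum_degrees_eq_twice_card_edges] at hsum
  have hcut := sum_ncard_neighborSet_diff_le_ncard_cutEdges G B
  rw [Set.ncard_eq_toFinset_card', Set.toFinset_card]
  omega

section onePlus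

variable {V : Type} {G : SimpleGraph V} {u v x y : V}

@[simp]
lemma onePlus_adj_inl_inl {a b : V} :
    (onePlus G u v x y).Adj (.inl a) (.inl b) ↔
      G.Adj a b ∧ s(a, b) ≠ s(u, v) ∧ s(a, b) ≠ s(x, y) := by
  simp only [onePlus, fromRel_adj, ne_eq, Sum.inl.injEq, Sym2.eq_swap (a := b)]
  constructor
  · rintro ⟨-, h | h⟩
    · exact h
    · exact ⟨h.1.symm, h.2⟩
  · exact fun h => ⟨h.1.ne, Or.inl h⟩

@[simp]
lemma onePlus_adj_inl_inr {a : V} {i : Fin 2} :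
    (onePlus G u v x y).Adj (.inl a) (.inr i) ↔
      (i = 0 ∧ (a = u ∨ a = v)) ∨ (i = 1 ∧ (a = x ∨ a = y)) := by
  simp [onePlus]

@[simp]
lemma onePlus_adj_inr_inl {a : V} {i : Fin 2} :
    (onePlus G u v x y).Adj (.inr i) (.inl a) ↔
      (i = 0 ∧ (a = u ∨ a = v)) ∨ (i = 1 ∧ (a = x ∨ a = y)) := by
  rw [adj_comm, onePlus_adj_inl_inr]

@[simp]
lemma onePlus_adj_inr_inr {i j : Fin 2} :
    (onePlus G u v x y).Adj (.inr i) (.inr j) ↔ i ≠ j := by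
  simp [onePlus, eq_comm]

lemma longOneExtData_of_forall_not_adjacent (huv : G.Adj u v) (hxy : G.Adj x y)
    (hux : u ≠ x) (huy : u ≠ y) (hvx : v ≠ x) (hvy : v ≠ y)
    (hnoadj : ∀ a b : V, G.Adj a b → s(a, b) ≠ s(u, v) → s(a, b) ≠ s(x, y) →
      ¬ ((a = u ∨ a = v ∨ b = u ∨ b = v) ∧ (a = x ∨ a = y ∨ b = x ∨ b = y))) :
    LongOneExtData G u v x y := by
  refine ⟨⟨huv, hxy, hux, huy, hvx, hvy⟩, ?_, ?_, ?_, ?_⟩ <;>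
  · intro h
    refine hnoadj _ _ h ?_ ?_ (by simp) <;>
    simp [hux, huy, hvx, hvy, hux.symm, huy.symm, hvx.symm, hvy.symm, huv.ne, hxy.ne]

lemma LongOneExtData.exists_three_inl_of_inr_mem {C : Set (V ⊕ Fin 2)}
    (h : LongOneExtData G u v x y) (hC : (onePlus G u v x y).TwoNeighborsIn C) {i : Fin 2}
    (hi : .inr i ∈ C) (hCi : ∀ j, .inr j ∈ C → j = i) :
    ∃ a b c, a ≠ b ∧ a ≠ c ∧ b ≠ c ∧ .inl a ∈ C ∧ .inl b ∈ C ∧ .inl c ∈ C := by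
  obtain ⟨⟨huv, hxy, hux, huy, hvx, hvy⟩, -⟩ := h
  have hinl : ∀ q ∈ C, q ≠ .inr i → ∃ p, q = .inl p := by
    rintro (p | j) hq hqi
    · exact ⟨p, rfl⟩
    · exact absurd (congrArg _ (hCi j hq)) hqi
  obtain ⟨q, hq, hiq, -⟩ := hC _ hi (.inr i)
  obtain ⟨p, rfl⟩ := hinl _ hq hiq.ne'
  obtain ⟨q', hq', hiq', hq'p⟩ := hC _ hi (.inl p)
  obtain ⟨p', rfl⟩ := hinl _ hq' hiq'.ne'
  obtain ⟨w, hw, hpw, hwi⟩ := hC _ hq (.inr i)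
  obtain ⟨w, rfl⟩ := hinl _ hw hwi
  refine ⟨p, p', w, fun h => hq'p (congrArg _ h.symm), (onePlus_adj_inl_inl.mp hpw).1.ne, ?_,
    hq, hq', hw⟩
  -- `p, p'` are the two ends of the edge subdivided by `zᵢ`, but `pw` is not that edge
  rintro rfl
  simp only [onePlus_adj_inl_inl, onePlus_adj_inr_inl] at hpw hiq hiq' hq'p
  fin_cases i <;> simp at hiq hiq' <;> grind [Sym2.eq_swap]

lemma LongOneExtData.exists_three_inl_of_twoNeighborsIn {C : Set (V ⊕ Fin 2)}
    (h : LongOneExtData G u v x y) (hC : (onePlus G u v x y).TwoNeighborsIn C)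
    (hCne : C.Nonempty) :
    ∃ a b c, a ≠ b ∧ a ≠ c ∧ b ≠ c ∧ .inl a ∈ C ∧ .inl b ∈ C ∧ .inl c ∈ C := by
  have ⟨⟨huv, hxy, hux, huy, hvx, hvy⟩, hnux, hnuy, hnvx, hnvy⟩ := h
  by_cases h0 : .inr 0 ∈ C <;> by_cases h1 : .inr 1 ∈ C
  · -- `C` contains `p, z₀, z₁, r` with `p ∈ {u, v}`, `r ∈ {x, y}`, and a further neighbour `w`
    -- of `p`, which is not `r` as the extension is long
    obtain ⟨p, hp, h0p, hp1⟩ := hC _ h0 (.inr 1)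
    obtain ⟨r, hr, h1r, hr0⟩ := hC _ h1 (.inr 0)
    rcases p with p | j
    swap; · fin_cases j <;> simp_all
    rcases r with r | j
    swap; · fin_cases j <;> simp_all
    obtain ⟨w, hw, hpw, hw0⟩ := hC _ hp (.inr 0)
    simp only [onePlus_adj_inr_inl, Fin.isValue, zero_ne_one, false_and, or_false,
      one_ne_zero, false_or, true_and] at h0p h1r
    rcases w with w | j
    swap; · fin_cases j <;> simp at hpw hw0; grind
    refine ⟨p, r, w, by grind, (onePlus_adj_inl_inl.mp hpw).1.ne, ?_, hp, hr, hw⟩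
    rintro rfl
    simp only [onePlus_adj_inl_inl] at hpw
    grind
  · exact h.exists_three_inl_of_inr_mem hC h0 fun j hj => by fin_cases j <;> simp_all
  · exact h.exists_three_inl_of_inr_mem hC h1 fun j hj => by fin_cases j <;> simp_all
  · have hinl : ∀ q ∈ C, ∃ a, q = .inl a := by
      rintro (a | j) hq
      · exact ⟨a, rfl⟩
      · fin_cases j <;> simp_all
    obtain ⟨_, hc⟩ := hCne
    obtain ⟨a, rfl⟩ := hinl _ hc
    obtain ⟨_, hb, hab, -⟩ := hC _ hc (.inl a)
    obtain ⟨b, rfl⟩ := hinl _ hb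
    obtain ⟨_, hb', hab', hb'b⟩ := hC _ hc (.inl b)
    obtain ⟨b', rfl⟩ := hinl _ hb'
    exact ⟨a, b, b', (onePlus_adj_inl_inl.mp hab).1.ne, (onePlus_adj_inl_inl.mp hab').1.ne,
      fun h => hb'b (h ▸ rfl), hc, hb, hb'⟩

lemma LongOneExtData.two_lt_ncard_preimage_inl [Finite V] (h : LongOneExtData G u v x y)
    {A : Set (V ⊕ Fin 2)} (hA : HasCircuit ((onePlus G u v x y).induce A)) :
    2 < (Sum.inl ⁻¹' A).ncard := by
  obtain ⟨C, hCA, hCne, hC⟩ := exists_twoNeighborsIn_of_hasCircuit hA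
  obtain ⟨a, b, c, hab, hac, hbc, ha, hb, hc⟩ := h.exists_three_inl_of_twoNeighborsIn hC hCne
  exact (Set.two_lt_ncard_iff).mpr ⟨a, b, c, hCA ha, hCA hb, hCA hc, hab, hac, hbc⟩

lemma ncard_cutEdges_preimage_inl_le [Finite V] (A : Set (V ⊕ Fin 2)) :
    (cutEdges G (Sum.inl ⁻¹' A)).ncard ≤ (cutEdges (onePlus G u v x y) A).ncard := by
  classical
  let origin : Sym2 (V ⊕ Fin 2) → Sym2 V := fun e =>
    if .inr 0 ∈ e then s(u, v)
    else if .inr 1 ∈ e then s(x, y)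
    else e.map (Sum.elim id fun _ => u)
  refine (Set.ncard_le_ncard (s := cutEdges G _) (t := origin '' cutEdges _ A) ?_).trans
    Set.ncard_image_le
  rintro _ ⟨a, b, ha, hb, hab, rfl⟩
  by_cases h₀ : s(a, b) = s(u, v)
  · have hab' : (a = u ∨ a = v) ∧ (b = u ∨ b = v) := by grind [Sym2.eq_iff]
    rcases mem_cutEdges_or_mem_cutEdges_of_adj_adj (G := onePlus G u v x y) ha hb
      (z := .inr 0) (by simp [hab'.1]) (by simp [hab'.2]) with he | he <;>
    exact ⟨_, he, by simp [origin, h₀]⟩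
  by_cases h₁ : s(a, b) = s(x, y)
  · have hab' : (a = x ∨ a = y) ∧ (b = x ∨ b = y) := by grind [Sym2.eq_iff]
    rcases mem_cutEdges_or_mem_cutEdges_of_adj_adj (G := onePlus G u v x y) ha hb
      (z := .inr 1) (by simp [hab'.1]) (by simp [hab'.2]) with he | he <;>
    exact ⟨_, he, by simp [origin, h₁]⟩
  exact ⟨s(.inl a, .inl b), ⟨_, _, ha, hb, onePlus_adj_inl_inl.mpr ⟨hab, h₀, h₁⟩, rfl⟩,
    by simp [origin]⟩

lemma LongOneExtData.not_hasCircuit_or_not_hasCircuit [Fintype V]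
    (h : LongOneExtData G u v x y) (hG : IsCubic G)
    (hcyc : ∀ B : Set V, B.Nonempty → Bᶜ.Nonempty → (cutEdges G B).ncard < 5 →
      ¬ HasCircuit (G.induce B) ∨ ¬ HasCircuit (G.induce Bᶜ))
    {A : Set (V ⊕ Fin 2)} (hA : (cutEdges (onePlus G u v x y) A).ncard < 5) :
    ¬ HasCircuit ((onePlus G u v x y).induce A) ∨
      ¬ HasCircuit ((onePlus G u v x y).induce Aᶜ) := by
  by_contra! ⟨hcA, hcAc⟩
  have hB := h.two_lt_ncard_preimage_inl hcA
  have hBc := h.two_lt_ncard_preimage_inl hcAc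
  rw [Set.preimage_compl] at hBc
  have hcut := ncard_cutEdges_preimage_inl_le (G := G) (u := u) (v := v) (x := x) (y := y) A
  rcases hcyc (Sum.inl ⁻¹' A) (Set.nonempty_of_ncard_ne_zero (by omega))
    (Set.nonempty_of_ncard_ne_zero (by omega)) (by omega) with hB' | hB'
  · have := hG.ncard_add_two_le_ncard_cutEdges (Set.nonempty_of_ncard_ne_zero (by omega)) hB'
    omega
  · have := hG.ncard_add_two_le_ncard_cutEdges (Set.nonempty_of_ncard_ne_zero (by omega)) hB'
    rw [cutEdges_compl] at this
    omega

def onePlusProj (u x : V) : V ⊕ Fin 2 → V := Sum.elim id ![u, x]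

@[simp]
lemma mem_image_onePlusProj {S : Set (V ⊕ Fin 2)} {a : V} :
    a ∈ onePlusProj u x '' S ↔ .inl a ∈ S ∨ (.inr 0 ∈ S ∧ u = a) ∨ (.inr 1 ∈ S ∧ x = a) := by
  simp [onePlusProj, Fin.exists_fin_two]

lemma inl_mem_compl_of_notMem_image_onePlusProj {S : Set (V ⊕ Fin 2)} {a : V}
    (ha : a ∉ onePlusProj u x '' S) : .inl a ∈ Sᶜ :=
  fun h => ha ⟨_, h, rfl⟩

lemma onePlus_induce_reachable_inl_of_adj {S : Set (V ⊕ Fin 2)} {c d : V}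
    (hc : c ∉ onePlusProj u x '' S) (hd : d ∉ onePlusProj u x '' S) (hcd : G.Adj c d) :
    ((onePlus G u v x y).induce Sᶜ).Reachable
      ⟨.inl c, inl_mem_compl_of_notMem_image_onePlusProj hc⟩
      ⟨.inl d, inl_mem_compl_of_notMem_image_onePlusProj hd⟩ := by
  have via : ∀ i, .inr i ∉ S → (onePlus G u v x y).Adj (.inl c) (.inr i) →
      (onePlus G u v x y).Adj (.inr i) (.inl d) →
      ((onePlus G u v x y).induce Sᶜ).Reachable
        ⟨.inl c, inl_mem_compl_of_notMem_image_onePlusProj hc⟩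
        ⟨.inl d, inl_mem_compl_of_notMem_image_onePlusProj hd⟩ := fun i hi h₁ h₂ =>
    (h₁.reachable_induce _ hi).trans (h₂.reachable_induce hi _)
  simp only [mem_image_onePlusProj, not_or, not_and] at hc hd
  by_cases h₀ : s(c, d) = s(u, v)
  · have := Sym2.eq_iff.mp h₀
    exact via 0 (by grind) (by simp; grind) (by simp; grind)
  by_cases h₁ : s(c, d) = s(x, y)
  · have := Sym2.eq_iff.mp h₁
    exact via 1 (by grind) (by simp; grind) (by simp; grind)
  exact (onePlus_adj_inl_inl.mpr ⟨hcd, h₀, h₁⟩).reachable_induce _ _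

def JoinedToLift (G : SimpleGraph V) (u v x y : V) (S : Set (V ⊕ Fin 2)) (r : ↥Sᶜ) : Prop :=
  ∃ (a : V) (ha : a ∉ onePlusProj u x '' S), ((onePlus G u v x y).induce Sᶜ).Reachable
    ⟨.inl a, inl_mem_compl_of_notMem_image_onePlusProj ha⟩ r

lemma JoinedToLift.of_adj {S : Set (V ⊕ Fin 2)} {r r' : ↥Sᶜ}
    (h : (onePlus G u v x y).Adj r r') (hr' : JoinedToLift G u v x y S r') :
    JoinedToLift G u v x y S r :=
  let ⟨a, ha, hreach⟩ := hr'
  ⟨a, ha, hreach.trans (Adj.reachable (G := (onePlus G u v x y).induce Sᶜ) h).symm⟩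

lemma LongOneExtData.joinedToLift_inl [Finite V] (h : LongOneExtData G u v x y)
    (hG : IsCubic G) {S : Set (V ⊕ Fin 2)} (hS : S.ncard < 3) {a : V} (ha : .inl a ∈ Sᶜ) :
    JoinedToLift G u v x y S ⟨.inl a, ha⟩ := by
  have ⟨⟨huv, hxy, hux, huy, hvx, hvy⟩, hnux, _, _, _⟩ := h
  -- an end `p` of an edge `pq` whose subdivision vertex lies in `S` keeps one of its two other
  -- neighbours, as `S` has room for only one of them
  have endpoint : ∀ {p q : V} {i : Fin 2}, G.Adj p q → .inr i ∈ S →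
      (∀ w, G.Adj p w → w ≠ q → w ∈ onePlusProj u x '' S → .inl w ∈ S) →
      (∀ w, G.Adj p w → w ≠ q → (onePlus G u v x y).Adj (.inl p) (.inl w)) →
      ∀ hp, JoinedToLift G u v x y S ⟨.inl p, hp⟩ := by
    intro p q i hpq hi hproj hadj hp
    obtain ⟨w₁, w₂, hw, hpw₁, hpw₂, hw₁q, hw₂q⟩ := hG.exists_two_neighbors_ne hpq
    obtain ⟨w, hpw, hwq, hw⟩ : ∃ w, G.Adj p w ∧ w ≠ q ∧ w ∉ onePlusProj u x '' S := by
      by_contra! hall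
      have := (Set.two_lt_ncard_iff).mpr ⟨_, _, _, hi, hproj _ hpw₁ hw₁q (hall _ hpw₁ hw₁q),
        hproj _ hpw₂ hw₂q (hall _ hpw₂ hw₂q), by simp, by simp, by simpa⟩
      omega
    exact JoinedToLift.of_adj (r' := ⟨_, inl_mem_compl_of_notMem_image_onePlusProj hw⟩)
      (hadj w hpw hwq) ⟨w, hw, .rfl⟩
  by_cases haS : a ∈ onePlusProj u x '' S
  · rcases mem_image_onePlusProj.mp haS with haS | ⟨h0, rfl⟩ | ⟨h1, rfl⟩
    · exact absurd haS ha
    · refine endpoint huv h0 (fun w hw _ hwS => ?_) (fun w hw hwv => ?_) ha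
      · simp only [mem_image_onePlusProj] at hwS
        grind [Adj.ne]
      · simp only [onePlus_adj_inl_inl]
        grind [Sym2.eq_iff]
    · refine endpoint hxy h1 (fun w hw _ hwS => ?_) (fun w hw hwv => ?_) ha
      · simp only [mem_image_onePlusProj] at hwS
        grind [Adj.ne, Adj.symm]
      · simp only [onePlus_adj_inl_inl]
        grind [Sym2.eq_iff]
  · exact ⟨a, haS, .rfl⟩

lemma LongOneExtData.joinedToLift_inr [Finite V] (h : LongOneExtData G u v x y)
    (hG : IsCubic G) {S : Set (V ⊕ Fin 2)} (hS : S.ncard < 3) {i : Fin 2} (hi : .inr i ∈ Sᶜ) :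
    JoinedToLift G u v x y S ⟨.inr i, hi⟩ := by
  have ⟨⟨huv, hxy, hux, huy, hvx, hvy⟩, _⟩ := h
  -- if both old neighbours `p, q` of `zᵢ` lie in `S`, the path `zᵢ zⱼ p'` survives
  have key : ∀ {j : Fin 2} {p q p' : V}, (onePlus G u v x y).Adj (.inr i) (.inl p) →
      (onePlus G u v x y).Adj (.inr i) (.inl q) → (onePlus G u v x y).Adj (.inr i) (.inr j) →
      (onePlus G u v x y).Adj (.inr j) (.inl p') → p ≠ q → p' ≠ p → p' ≠ q →
      JoinedToLift G u v x y S ⟨.inr i, hi⟩ := by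
    intro j p q p' hp hq hj hp' hpq hp'p hp'q
    by_cases hpS : .inl p ∈ S
    · by_cases hqS : .inl q ∈ S
      · have hS' : ∀ r ∈ S, r = .inl p ∨ r = .inl q := by
          intro r hr
          by_contra! hr'
          have := (Set.two_lt_ncard_iff).mpr
            ⟨_, _, _, hpS, hqS, hr, by simpa, hr'.1.symm, hr'.2.symm⟩
          omega
        have hjS : .inr j ∈ Sᶜ := fun hj => by simpa using hS' _ hj
        have hp'S : .inl p' ∈ Sᶜ := fun hp'S => by simpa [hp'p, hp'q] using hS' _ hp'S
        exact .of_adj (r' := ⟨_, hjS⟩) hj <| .of_adj (r' := ⟨_, hp'S⟩) hp' <|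
          h.joinedToLift_inl hG hS hp'S
      · exact .of_adj (r' := ⟨_, hqS⟩) hq (h.joinedToLift_inl hG hS hqS)
    · exact .of_adj (r' := ⟨_, hpS⟩) hp (h.joinedToLift_inl hG hS hpS)
  fin_cases i
  · exact key (j := 1) (p' := x) (by simp) (by simp) (by simp) (by simp) huv.ne hux.symm
      hvx.symm
  · exact key (j := 0) (p' := u) (by simp) (by simp) (by simp) (by simp) hxy.ne hux huy

lemma LongOneExtData.onePlus_induce_compl_connected [Finite V] (h : LongOneExtData G u v x y)
    (hG : IsCubic G) (hG3 : ∀ S : Set V, S.ncard < 3 → (G.induce Sᶜ).Connected)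
    {S : Set (V ⊕ Fin 2)} (hS : S.ncard < 3) :
    ((onePlus G u v x y).induce Sᶜ).Connected := by
  refine (hG3 _ ((Set.ncard_image_le).trans_lt hS)).of_reachable_map
    (fun a => ⟨.inl a, inl_mem_compl_of_notMem_image_onePlusProj a.2⟩)
    (fun a b hab => onePlus_induce_reachable_inl_of_adj a.2 b.2 hab) ?_
  rintro ⟨r | i, hr⟩
  · obtain ⟨a, ha, hreach⟩ := h.joinedToLift_inl hG hS hr
    exact ⟨⟨a, ha⟩, hreach⟩
  · obtain ⟨a, ha, hreach⟩ := h.joinedToLift_inr hG hS hr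
    exact ⟨⟨a, ha⟩, hreach⟩

end onePlus

theorem handleExpansion_cyclically5Connected_general
    {V : Type} [Fintype V] (G : SimpleGraph V) (hcub : IsCubic G)
    (h5 : CyclicallyKConnected G 5) (u v x y : V)
    (huv : G.Adj u v) (hxy : G.Adj x y)
    (hux : u ≠ x) (huy : u ≠ y) (hvx : v ≠ x) (hvy : v ≠ y)
    (hnoadj : ∀ a b : V, G.Adj a b → s(a, b) ≠ s(u, v) → s(a, b) ≠ s(x, y) →
      ¬ ((a = u ∨ a = v ∨ b = u ∨ b = v) ∧ (a = x ∨ a = y ∨ b = x ∨ b = y))) :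
    CyclicallyKConnected (onePlus G u v x y) 5 := by
  obtain ⟨⟨hcard, hG3⟩, hcard10, hcyc⟩ := h5
  have h := longOneExtData_of_forall_not_adjacent huv hxy hux huy hvx hvy hnoadj
  refine ⟨⟨?_, fun S hS => h.onePlus_induce_compl_connected hcub hG3 hS⟩, ?_,
    fun A _ _ hA => h.not_hasCircuit_or_not_hasCircuit hcub hcyc hA⟩ <;>
  · simp only [Fintype.card_sum, Fintype.card_fin]
    omega

/-- a handle expansion of a cyclically 5-connected cubic graph is
cyclically 5-connected. -/
theorem handleExpansion_cyclically5Connected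
    {V : Type} [Fintype V] (G : SimpleGraph V) (hcub : IsCubic G)
    (h5 : CyclicallyKConnected G 5) (u v x y : V)
    (huv : G.Adj u v) (hxy : G.Adj x y) (hef : s(u, v) ≠ s(x, y))
    (hux : u ≠ x) (huy : u ≠ y) (hvx : v ≠ x) (hvy : v ≠ y)
    (hnoadj : ∀ a b : V, G.Adj a b → s(a, b) ≠ s(u, v) → s(a, b) ≠ s(x, y) →
      ¬ ((a = u ∨ a = v ∨ b = u ∨ b = v) ∧ (a = x ∨ a = y ∨ b = x ∨ b = y))) :
    CyclicallyKConnected (onePlus G u v x y) 5 :=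
  handleExpansion_cyclically5Connected_general G hcub h5 u v x y huv hxy hux huy hvx hvy hnoadj
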